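/- Let ε ∈ {1,−1}, ξ ∈ ℝ, w_m > −1, and let Δ > 0, Z, Z′ ≠ 0, Y > 0 be real numbers with Y² = 1 − 6εξZ². Set K = −(ε/2)·Y⁴/Z′ + 12ξ(1 + 6εξZ²), and define p = 3(2+w_m)Δ, q = Δ·(K + 9(1+w_m)Δ), r = 3(1+w_m)Δ²·K. If K > 0, then p > 0, r > 0 and q − r/p > 0, and consequently every complex root ℓ of the cubic ℓ³ + pℓ² + qℓ + r = 0 has negative real part. -/
import Mathlib

/-- Routh–Hurwitz for a cubic with positive coefficients and `r < p*q`. -/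
lemma cubic_roots_neg_re (p q r : ℝ) (hp : 0 < p) (hq : 0 < q) (hr : 0 < r)
    (hpq : r < p * q) :
    ∀ ℓ : ℂ, ℓ^3 + (p : ℂ)*ℓ^2 + (q : ℂ)*ℓ + (r : ℂ) = 0 → ℓ.re < 0 := by
  intro ℓ h
  by_contra hx
  push_neg at hx
  have h1 := congrArg Complex.re h
  have h2 := congrArg Complex.im h
  simp only [Complex.add_re, Complex.add_im, Complex.mul_re, Complex.mul_im,
    Complex.ofReal_re, Complex.ofReal_im, Complex.zero_re, Complex.zero_im,
    pow_succ, pow_zero, one_mul, Complex.one_re, Complex.one_im] at h1 h2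
  rcases eq_or_ne ℓ.im 0 with hy | hy
  · rw [hy] at h1
    set x := ℓ.re with hxdef
    nlinarith [sq_nonneg x, mul_pos hp hq]
  · set x := ℓ.re with hxdef
    set y := ℓ.im with hydef
    have h2' : 3*x^2 - y^2 + 2*p*x + q = 0 := by
      have : y * (3*x^2 - y^2 + 2*p*x + q) = 0 := by ring_nf; ring_nf at h2; linarith
      rcases mul_eq_zero.mp this with h | h
      · exact absurd h hy
      · exact h
    nlinarith [sq_nonneg x, sq_nonneg y, mul_nonneg hx (sq_nonneg x),
      mul_nonneg hx hp.le, mul_nonneg (mul_nonneg hx hp.le) hx,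
      mul_nonneg hx hq.le, mul_nonneg hx (sq_nonneg p)]

/-- Routh–Hurwitz stability of the accelerated-expansion point:
for the cubic `ℓ³ + pℓ² + qℓ + r` with `p = 3(2+w_m)Δ`, `q = Δ(K + 9(1+w_m)Δ)`,
`r = 3(1+w_m)Δ²K`, `K = −(ε/2)Y⁴/Z′ + 12ξ(1+6εξZ²)`, if `K > 0` then `p > 0`,
`r > 0`, `q − r/p > 0`, and every complex root has negative real part. -/
theorem routh_hurwitz_deSitter (ε ξ wm Δ Z Z' Y : ℝ)
    (hε : ε = 1 ∨ ε = -1) (hwm : -1 < wm) (hΔ : 0 < Δ)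
    (hZ' : Z' ≠ 0) (hY : 0 < Y) (hY2 : Y^2 = 1 - 6*ε*ξ*Z^2) :
    let K : ℝ := -(ε/2)*Y^4/Z' + 12*ξ*(1 + 6*ε*ξ*Z^2)
    let p : ℝ := 3*(2+wm)*Δ
    let q : ℝ := Δ*(K + 9*(1+wm)*Δ)
    let r : ℝ := 3*(1+wm)*Δ^2*K
    0 < K →
      0 < p ∧ 0 < r ∧ 0 < q - r/p ∧
      ∀ ℓ : ℂ, ℓ^3 + (p : ℂ)*ℓ^2 + (q : ℂ)*ℓ + (r : ℂ) = 0 → ℓ.re < 0 := by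
  intro K p q r hK
  have hw1 : 0 < 1 + wm := by linarith
  have hw2 : 0 < 2 + wm := by linarith
  have hp : 0 < p := by positivity
  have hq : 0 < q := by
    have : 0 < K + 9*(1+wm)*Δ := by positivity
    positivity
  have hr : 0 < r := by positivity
  have hpq : r < p * q := by
    have h1 : p * q - r = 3*Δ^2*(K + 9*(2+wm)*(1+wm)*Δ) := by
      simp only [p, q, r]; ring
    nlinarith [mul_pos hw1 hK, mul_pos (mul_pos hw2 hw1) hΔ, sq_nonneg Δ,
      mul_pos (mul_pos hΔ hΔ) hK]
  refine ⟨hp, hr, ?_, cubic_roots_neg_re p q r hp hq hr hpq⟩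
  rw [sub_pos, div_lt_iff₀ hp]
  linarith [hpq]
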